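/- Let T < T' be NBC spanning trees of G (in lexicographic order) and let f ∈ E(G) \ E(T) be an edge such that IN(T') ⊆ IN(T) ∪ {f} ⊆ E(T'). Then E(T') = (E(T) \ {e}) ∪ {f}, where e is the maximal internally active edge of T lying in cyc(T,f); moreover IN(T') = IN(T) ∪ {f}. -/

import Mathlib

open SimpleGraph

variable {V : Type*}

attribute [-instance] Sym2.instPartialOrder

/-- `T` is a spanning tree of `G`: a subgraph of `G` (on the same vertex set) that is a tree. -/
def IsSpanningTree (G T : SimpleGraph V) : Prop :=
  T ≤ G ∧ T.IsTree

/-- `cutset G T e`: the set of edges of `G` whose endpoints lie in the two different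
components of `T` with the edge `e` deleted. -/
def cutset (G T : SimpleGraph V) (e : Sym2 V) : Set (Sym2 V) :=
  {f | f ∈ G.edgeSet ∧ ∀ u v : V, f = s(u, v) → ¬ (T.deleteEdges {e}).Reachable u v}

/-- `cycset T f`: the edge set of the unique cycle of `T` with the edge `f` added
(an edge of the unicyclic connected graph `T + f` lies on the cycle iff deleting it
keeps the graph connected). -/
def cycset (T : SimpleGraph V) (f : Sym2 V) : Set (Sym2 V) :=
  {e | e ∈ (T ⊔ fromEdgeSet {f}).edgeSet ∧
    ((T ⊔ fromEdgeSet {f}).deleteEdges {e}).Connected}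

/-- An edge `e` of `T` is internally active if it is the minimum of `cutset G T e`. -/
def InternallyActive [LinearOrder (Sym2 V)] (G T : SimpleGraph V) (e : Sym2 V) : Prop :=
  e ∈ T.edgeSet ∧ ∀ f ∈ cutset G T e, e ≤ f

/-- `IN G T`: the set of internally inactive edges of `T`. -/
def IN [LinearOrder (Sym2 V)] (G T : SimpleGraph V) : Set (Sym2 V) :=
  {e | e ∈ T.edgeSet ∧ ¬ InternallyActive G T e}

/-- `C` is the edge set of some cycle of `G`. -/
def IsCycleEdgeSet (G : SimpleGraph V) (C : Set (Sym2 V)) : Prop :=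
  ∃ (v : V) (w : G.Walk v v), w.IsCycle ∧ C = {e | e ∈ w.edges}

/-- A broken circuit: the edge set of a cycle with its minimum edge removed. -/
def IsBrokenCircuit [LinearOrder (Sym2 V)] (G : SimpleGraph V) (B : Set (Sym2 V)) : Prop :=
  ∃ (C : Set (Sym2 V)) (e : Sym2 V),
    IsCycleEdgeSet G C ∧ e ∈ C ∧ (∀ f ∈ C, e ≤ f) ∧ B = C \ {e}

/-- A set of edges is NBC if it contains no broken circuit. -/
def IsNBC [LinearOrder (Sym2 V)] (G : SimpleGraph V) (S : Set (Sym2 V)) : Prop :=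
  ∀ B : Set (Sym2 V), IsBrokenCircuit G B → ¬ B ⊆ S

/-- `T` is an NBC spanning tree of `G`. -/
def IsNBCSpanningTree [LinearOrder (Sym2 V)] (G T : SimpleGraph V) : Prop :=
  IsSpanningTree G T ∧ IsNBC G T.edgeSet

/-- The edge set of `T` written as a list in increasing order. -/
noncomputable def edgeList [Fintype V] [LinearOrder (Sym2 V)] (T : SimpleGraph V) :
    List (Sym2 V) :=
  (Set.toFinite T.edgeSet).toFinset.sort (· ≤ ·)

/-- Lexicographic order on spanning trees via their sorted edge lists. -/
def treeLexLT [Fintype V] [LinearOrder (Sym2 V)] (T T' : SimpleGraph V) : Prop :=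
  List.Lex (· < ·) (edgeList T) (edgeList T')

private lemma hrep (z : Sym2 V) : ∃ a b, z = s(a, b) :=
  Sym2.ind (fun a b => ⟨a, b, rfl⟩) z

private lemma walk_rel {M : SimpleGraph V} (r : V → V → Prop) (hrefl : ∀ a, r a a)
    (htrans : ∀ {a b c}, r a b → r b c → r a c)
    (hadj : ∀ u v, M.Adj u v → r u v) {a b : V} (h : M.Reachable a b) : r a b := by
  obtain ⟨w⟩ := h
  induction w with
  | nil => exact hrefl _
  | cons h p ih => exact htrans (hadj _ _ h) ih

private lemma reach_of_reach {M H : SimpleGraph V}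
    (hadj : ∀ u v, M.Adj u v → H.Reachable u v)
    {a b : V} (h : M.Reachable a b) : H.Reachable a b :=
  walk_rel (fun u v => H.Reachable u v) (fun _ => Reachable.refl _)
    (fun h1 h2 => h1.trans h2) hadj h

private lemma reach_sup_edge_iff {H : SimpleGraph V} {a b : V} (hab : a ≠ b) {u v : V} :
    (H ⊔ fromEdgeSet {s(a, b)}).Reachable u v ↔
      H.Reachable u v ∨ (H.Reachable u a ∧ H.Reachable b v) ∨
        (H.Reachable u b ∧ H.Reachable a v) := by
  constructor
  · intro h
    refine walk_rel (fun x y => H.Reachable x y ∨ (H.Reachable x a ∧ H.Reachable b y) ∨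
      (H.Reachable x b ∧ H.Reachable a y)) (fun x => Or.inl (Reachable.refl x)) ?_ ?_ h
    · rintro x y z (hxy | ⟨hxa, hby⟩ | ⟨hxb, hay⟩) (hyz | ⟨hya, hbz⟩ | ⟨hyb, haz⟩)
      · exact Or.inl (hxy.trans hyz)
      · exact Or.inr (Or.inl ⟨hxy.trans hya, hbz⟩)
      · exact Or.inr (Or.inr ⟨hxy.trans hyb, haz⟩)
      · exact Or.inr (Or.inl ⟨hxa, hby.trans hyz⟩)
      · exact Or.inl (hxa.trans (((hby.trans hya).symm).trans hbz))
      · exact Or.inl (hxa.trans haz)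
      · exact Or.inr (Or.inr ⟨hxb, hay.trans hyz⟩)
      · exact Or.inl (hxb.trans hbz)
      · exact Or.inl (hxb.trans (((hay.trans hyb).symm).trans haz))
    · intro x y hxy
      rcases (sup_adj _ _ _ _).mp hxy with h' | h'
      · exact Or.inl h'.reachable
      · rw [fromEdgeSet_adj] at h'
        rcases h' with ⟨hmem, hne⟩
        rcases Sym2.eq_iff.mp (Set.mem_singleton_iff.mp hmem) with ⟨rfl, rfl⟩ | ⟨rfl, rfl⟩
        · exact Or.inr (Or.inl ⟨Reachable.refl _, Reachable.refl _⟩)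
        · exact Or.inr (Or.inr ⟨Reachable.refl _, Reachable.refl _⟩)
  · have hadj : (H ⊔ fromEdgeSet {s(a, b)}).Adj a b :=
      (sup_adj _ _ _ _).mpr (Or.inr ((fromEdgeSet_adj _).mpr ⟨rfl, hab⟩))
    rintro (h | ⟨h1, h2⟩ | ⟨h1, h2⟩)
    · exact h.mono le_sup_left
    · exact ((h1.mono le_sup_left).trans hadj.reachable).trans (h2.mono le_sup_left)
    · exact ((h1.mono le_sup_left).trans hadj.symm.reachable).trans (h2.mono le_sup_left)

private lemma walk_seg {M : SimpleGraph V} {a b : V} (w : M.Walk a b)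
    (hnd : w.edges.Nodup) (d : M.Dart) (hd : d ∈ w.darts) :
    (M.deleteEdges {d.edge}).Reachable a d.fst ∧ (M.deleteEdges {d.edge}).Reachable d.snd b := by
  induction w with
  | nil => simp at hd
  | @cons u x b h p ih =>
    rw [Walk.edges_cons, List.nodup_cons] at hnd
    rw [Walk.darts_cons] at hd
    rcases List.mem_cons.mp hd with rfl | hd'
    · refine ⟨Reachable.refl _, ?_⟩
      exact ⟨p.toDeleteEdges {Dart.edge ⟨(u, x), h⟩} (fun e' he' hmem => by
        rw [Set.mem_singleton_iff] at hmem
        rw [hmem] at he'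
        exact hnd.1 he')⟩
    · have hmem : d.edge ∈ p.edges := List.mem_map_of_mem (f := Dart.edge) hd'
      have hne : s(u, x) ≠ d.edge := fun hEq => hnd.1 (hEq ▸ hmem)
      have h' : (M.deleteEdges {d.edge}).Adj u x :=
        deleteEdges_adj.mpr ⟨h, by simpa using hne⟩
      obtain ⟨r1, r2⟩ := ih hnd.2 hd'
      exact ⟨h'.reachable.trans r1, r2⟩

private lemma tree_bridge {T : SimpleGraph V} (hac : T.IsAcyclic) {u v : V}
    (h : s(u, v) ∈ T.edgeSet) : ¬(T.deleteEdges {s(u, v)}).Reachable u v :=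
  ((isBridge_iff).mp (isAcyclic_iff_forall_edge_isBridge.mp hac h))

private lemma path_sep {T : SimpleGraph V} (hac : T.IsAcyclic) {a b : V} (w : T.Walk a b)
    (hnd : w.edges.Nodup) {d : T.Dart} (hd : d ∈ w.darts) :
    ¬(T.deleteEdges {d.edge}).Reachable a b := by
  intro hr
  obtain ⟨r1, r2⟩ := walk_seg w hnd d hd
  have hedge : d.edge = s(d.fst, d.snd) := rfl
  have hbr : ¬(T.deleteEdges {d.edge}).Reachable d.fst d.snd := by
    rw [hedge]
    exact tree_bridge hac (by rw [← hedge]; exact d.edge_mem)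
  exact hbr (r1.symm.trans (hr.trans r2.symm))

private lemma mem_cutset' {G T : SimpleGraph V} {x : Sym2 V} {u v : V}
    (hG : s(u, v) ∈ G.edgeSet) (h : ¬(T.deleteEdges {x}).Reachable u v) :
    s(u, v) ∈ cutset G T x := by
  refine ⟨hG, ?_⟩
  intro u' v' hEq
  rcases Sym2.eq_iff.mp hEq with ⟨rfl, rfl⟩ | ⟨rfl, rfl⟩
  · exact h
  · exact fun hr => h hr.symm

private lemma act_of_not_IN [LinearOrder (Sym2 V)] {G T : SimpleGraph V} {x : Sym2 V}
    (hx : x ∈ T.edgeSet) (hni : x ∉ IN G T) : InternallyActive G T x := by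
  by_contra h
  exact hni ⟨hx, h⟩

private lemma lemZ [LinearOrder (Sym2 V)] {G T T' : SimpleGraph V}
    (hT : IsSpanningTree G T) (hT' : IsSpanningTree G T')
    (hIN : IN G T ⊆ T'.edgeSet) {g : Sym2 V} (hg : g ∈ T'.edgeSet) (hgT : g ∉ T.edgeSet) :
    g ∈ IN G T' := by
  classical
  obtain ⟨a, b, rfl⟩ := hrep g
  refine ⟨hg, ?_⟩
  rintro ⟨-, hact⟩
  have hbr : ¬(T'.deleteEdges {s(a, b)}).Reachable a b := tree_bridge hT'.2.IsAcyclic hg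
  have hreach : T.Reachable a b := hT.2.isConnected.preconnected a b
  obtain ⟨w0⟩ := hreach
  set p := w0.toPath with hp
  obtain ⟨d, hd, hdS, hdnS⟩ := p.1.exists_boundary_dart
    {z | (T'.deleteEdges {s(a, b)}).Reachable a z} (Reachable.refl a) hbr
  have hdnr : ¬(T'.deleteEdges {s(a, b)}).Reachable d.fst d.snd :=
    fun h => hdnS (hdS.trans h)
  have hedge : d.edge = s(d.fst, d.snd) := rfl
  have hxT : s(d.fst, d.snd) ∈ T.edgeSet := d.adj
  have hxG : s(d.fst, d.snd) ∈ G.edgeSet := edgeSet_mono hT.1 hxT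
  have hxcut : s(d.fst, d.snd) ∈ cutset G T' s(a, b) := mem_cutset' hxG hdnr
  have hgx : s(a, b) ≤ s(d.fst, d.snd) := hact _ hxcut
  have hxT' : s(d.fst, d.snd) ∉ T'.edgeSet := by
    intro hmem
    have hxg : s(d.fst, d.snd) ≠ s(a, b) := fun hEq => hgT (hEq ▸ hxT)
    exact hdnr (Adj.reachable (deleteEdges_adj.mpr ⟨hmem, by simpa using hxg⟩))
  have hxact : InternallyActive G T s(d.fst, d.snd) :=
    act_of_not_IN hxT (fun hmem => hxT' (hIN hmem))
  have hgcut : s(a, b) ∈ cutset G T s(d.fst, d.snd) := by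
    apply mem_cutset' (edgeSet_mono hT'.1 hg)
    have := path_sep hT.2.IsAcyclic p.1 p.2.isTrail.edges_nodup hd
    rwa [hedge] at this
  have hxg' : s(d.fst, d.snd) ≤ s(a, b) := hxact.2 _ hgcut
  exact hgT (le_antisymm hxg' hgx ▸ hxT)

private lemma lemW [LinearOrder (Sym2 V)] {G T T' : SimpleGraph V} {e f : Sym2 V}
    (hTt : T.IsTree) (hT't : T'.IsTree) (hTG : T ≤ G)
    (hfG : f ∈ G.edgeSet) (hfT : f ∉ T.edgeSet) (heT : e ∈ T.edgeSet)
    (hE : T'.edgeSet = (T.edgeSet \ {e}) ∪ {f})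
    (heact : InternallyActive G T e)
    {x : Sym2 V} (hxT : x ∈ T.edgeSet) (hxT' : x ∈ T'.edgeSet)
    (hxina : ¬InternallyActive G T x) (hxact : InternallyActive G T' x) : False := by
  have hwit : ∃ y ∈ cutset G T x, ¬ x ≤ y := by
    by_contra h
    push_neg at h
    exact hxina ⟨hxT, h⟩
  obtain ⟨y, hycut, hyx'⟩ := hwit
  have hyx : y < x := not_le.mp hyx'
  have hyG : y ∈ G.edgeSet := hycut.1
  have hef : e ≠ f := fun h => hfT (h ▸ heT)
  have heT' : e ∉ T'.edgeSet := by
    rw [hE]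
    rintro (⟨-, h⟩ | h)
    · exact h rfl
    · exact hef h
  have hxe : x ≠ e := fun h => heT' (h ▸ hxT')
  have hxf : x ≠ f := fun h => hfT (h ▸ hxT)
  obtain ⟨c, d, rfl⟩ := hrep y
  obtain ⟨p, q, rfl⟩ := hrep e
  obtain ⟨p', q', rfl⟩ := hrep x
  obtain ⟨a, b, rfl⟩ := hrep f
  have hncd : ¬(T.deleteEdges {s(p', q')}).Reachable c d := hycut.2 c d rfl
  have hyreach : (T'.deleteEdges {s(p', q')}).Reachable c d := by
    by_contra hn
    exact hyx' (hxact.2 _ (mem_cutset' hyG hn))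
  have hpq : p ≠ q := (T.mem_edgeSet.mp heT).ne
  have hab : a ≠ b := (G.mem_edgeSet.mp hfG).ne
  have hp'q' : p' ≠ q' := (T.mem_edgeSet.mp hxT).ne
  set H := T.deleteEdges {s(p', q'), s(p, q)} with hH
  -- graph identities
  have e1 : T.deleteEdges {s(p', q')} = H ⊔ fromEdgeSet {s(p, q)} := by
    apply edgeSet_inj.mp
    rw [edgeSet_sup, hH, edgeSet_deleteEdges, edgeSet_deleteEdges, edgeSet_fromEdgeSet]
    ext z
    simp only [Set.mem_diff, Set.mem_union, Set.mem_insert_iff, Set.mem_singleton_iff,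
      Set.mem_setOf_eq]
    constructor
    · rintro ⟨hzT, hzx⟩
      by_cases hz : z = s(p, q)
      · exact Or.inr ⟨hz, hz ▸ T.not_isDiag_of_mem_edgeSet heT⟩
      · exact Or.inl ⟨hzT, by tauto⟩
    · rintro (⟨hzT, hz⟩ | ⟨rfl, -⟩)
      · exact ⟨hzT, by tauto⟩
      · exact ⟨heT, fun h => hxe h.symm⟩
  have e2 : T.deleteEdges {s(p, q)} = H ⊔ fromEdgeSet {s(p', q')} := by
    apply edgeSet_inj.mp
    rw [edgeSet_sup, hH, edgeSet_deleteEdges, edgeSet_deleteEdges, edgeSet_fromEdgeSet]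
    ext z
    simp only [Set.mem_diff, Set.mem_union, Set.mem_insert_iff, Set.mem_singleton_iff,
      Set.mem_setOf_eq]
    constructor
    · rintro ⟨hzT, hze⟩
      by_cases hz : z = s(p', q')
      · exact Or.inr ⟨hz, hz ▸ T.not_isDiag_of_mem_edgeSet hxT⟩
      · exact Or.inl ⟨hzT, by tauto⟩
    · rintro (⟨hzT, hz⟩ | ⟨rfl, -⟩)
      · exact ⟨hzT, by tauto⟩
      · exact ⟨hxT, hxe⟩
  have e3 : T'.deleteEdges {s(p', q')} = H ⊔ fromEdgeSet {s(a, b)} := by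
    apply edgeSet_inj.mp
    rw [edgeSet_sup, hH, edgeSet_deleteEdges, edgeSet_deleteEdges, edgeSet_fromEdgeSet, hE]
    ext z
    simp only [Set.mem_diff, Set.mem_union, Set.mem_insert_iff, Set.mem_singleton_iff,
      Set.mem_setOf_eq]
    constructor
    · rintro ⟨⟨hzT, hze⟩ | hzf, hzx⟩
      · exact Or.inl ⟨hzT, by tauto⟩
      · exact Or.inr ⟨hzf, hzf ▸ G.not_isDiag_of_mem_edgeSet hfG⟩
    · rintro (⟨hzT, hz⟩ | ⟨rfl, -⟩)
      · exact ⟨Or.inl ⟨hzT, by tauto⟩, by tauto⟩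
      · exact ⟨Or.inr rfl, fun h => hxf h.symm⟩
  have F5 : ¬H.Reachable p q := by
    have hbr : ¬(T.deleteEdges {s(p, q)}).Reachable p q := tree_bridge hTt.IsAcyclic heT
    intro h
    exact hbr (h.mono (T.deleteEdges_anti (by simp)))
  rw [e1, reach_sup_edge_iff hpq] at hncd
  rw [e3, reach_sup_edge_iff hab] at hyreach
  have F3 : ¬((H.Reachable p' q') ∨ (H.Reachable p' a ∧ H.Reachable b q') ∨
      (H.Reachable p' b ∧ H.Reachable a q')) := by
    have hbr : ¬(T'.deleteEdges {s(p', q')}).Reachable p' q' := tree_bridge hT't.IsAcyclic hxT'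
    rwa [e3, reach_sup_edge_iff hab] at hbr
  have final : ¬(H.Reachable c d ∨ (H.Reachable c p' ∧ H.Reachable q' d) ∨
        (H.Reachable c q' ∧ H.Reachable p' d)) →
      ¬(H.Reachable p q ∨ (H.Reachable p a ∧ H.Reachable b q) ∨
        (H.Reachable p b ∧ H.Reachable a q)) → False := by
    intro G1R G2R
    have hyce : s(c, d) ∈ cutset G T s(p, q) := by
      apply mem_cutset' hyG
      rw [e2, reach_sup_edge_iff hp'q']
      exact G1R
    have hey : s(p, q) ≤ s(c, d) := heact.2 _ hyce
    have hecut : s(p, q) ∈ cutset G T' s(p', q') := by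
      apply mem_cutset' (edgeSet_mono hTG heT)
      rw [e3, reach_sup_edge_iff hab]
      exact G2R
    have hxe' : s(p', q') ≤ s(p, q) := hxact.2 _ hecut
    exact absurd hxe' (not_le.mpr (lt_of_le_of_lt hey hyx))
  rcases hyreach with hcd | ⟨hca, hbd⟩ | ⟨hcb, had⟩
  · exact hncd (Or.inl hcd)
  · refine final ?_ ?_
    · rintro (h | ⟨h1, h2⟩ | ⟨h1, h2⟩)
      · exact hncd (Or.inl h)
      · exact F3 (Or.inr (Or.inl ⟨h1.symm.trans hca, hbd.trans h2.symm⟩))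
      · exact F3 (Or.inr (Or.inr ⟨h2.trans hbd.symm, hca.symm.trans h1⟩))
    · rintro (h | ⟨h1, h2⟩ | ⟨h1, h2⟩)
      · exact F5 h
      · exact hncd (Or.inr (Or.inl ⟨hca.trans h1.symm, h2.symm.trans hbd⟩))
      · exact hncd (Or.inr (Or.inr ⟨hca.trans h2, h1.trans hbd⟩))
  · refine final ?_ ?_
    · rintro (h | ⟨h1, h2⟩ | ⟨h1, h2⟩)
      · exact hncd (Or.inl h)
      · exact F3 (Or.inr (Or.inr ⟨h1.symm.trans hcb, had.trans h2.symm⟩))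
      · exact F3 (Or.inr (Or.inl ⟨h2.trans had.symm, hcb.symm.trans h1⟩))
    · rintro (h | ⟨h1, h2⟩ | ⟨h1, h2⟩)
      · exact F5 h
      · exact hncd (Or.inr (Or.inr ⟨hcb.trans h2, h1.trans had⟩))
      · exact hncd (Or.inr (Or.inl ⟨hcb.trans h1.symm, h2.symm.trans had⟩))

/-- if `T < T'` are NBC spanning trees and `f ∈ E(G) \ E(T)` satisfies
`IN(T') ⊆ IN(T) ∪ {f} ⊆ E(T')`, then `E(T') = (E(T) \ {e}) ∪ {f}` where `e` is the maximal
internally active edge of `T` lying in `cyc(T,f)`; moreover `IN(T') = IN(T) ∪ {f}`. -/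
theorem main_differential_lemma
    {V : Type*} [Fintype V] [LinearOrder (Sym2 V)] (G : SimpleGraph V)
    (hconn : G.Connected)
    (T T' : SimpleGraph V)
    (hT : IsNBCSpanningTree G T) (hT' : IsNBCSpanningTree G T')
    (hlt : treeLexLT T T')
    (f : Sym2 V) (hfG : f ∈ G.edgeSet) (hfT : f ∉ T.edgeSet)
    (h1 : IN G T' ⊆ IN G T ∪ {f}) (h2 : IN G T ∪ {f} ⊆ T'.edgeSet) :
    ∃ e : Sym2 V,
      e ∈ cycset T f ∧ InternallyActive G T e ∧
      (∀ g ∈ cycset T f, InternallyActive G T g → g ≤ e) ∧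
      T'.edgeSet = (T.edgeSet \ {e}) ∪ {f} ∧
      IN G T' = IN G T ∪ {f} := by
  classical
  have hIN : IN G T ⊆ T'.edgeSet := fun w hw => h2 (Set.mem_union_left _ hw)
  have hfT' : f ∈ T'.edgeSet := h2 (Set.mem_union_right _ rfl)
  have hA : T'.edgeSet \ T.edgeSet = {f} := by
    apply Set.eq_singleton_iff_unique_mem.mpr
    refine ⟨⟨hfT', hfT⟩, ?_⟩
    intro g hg
    rcases h1 (lemZ hT.1 hT'.1 hIN hg.1 hg.2) with hgIN | hgf
    · exact absurd hgIN.1 hg.2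
    · exact hgf
  haveI : Fintype ↥(T.edgeSet) := Fintype.ofFinite _
  haveI : Fintype ↥(T'.edgeSet) := Fintype.ofFinite _
  have hcT := hT.1.2.card_edgeFinset
  have hcT' := hT'.1.2.card_edgeFinset
  have hncT : T.edgeSet.ncard = T.edgeFinset.card := Set.ncard_eq_toFinset_card' _
  have hncT' : T'.edgeSet.ncard = T'.edgeFinset.card := Set.ncard_eq_toFinset_card' _
  have hs1 : (T'.edgeSet ∩ T.edgeSet).ncard + (T'.edgeSet \ T.edgeSet).ncard
      = T'.edgeSet.ncard := Set.ncard_inter_add_ncard_diff_eq_ncard _ _ (Set.toFinite _)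
  have hs2 : (T.edgeSet ∩ T'.edgeSet).ncard + (T.edgeSet \ T'.edgeSet).ncard
      = T.edgeSet.ncard := Set.ncard_inter_add_ncard_diff_eq_ncard _ _ (Set.toFinite _)
  rw [Set.inter_comm] at hs2
  have hAcard : (T'.edgeSet \ T.edgeSet).ncard = 1 := by rw [hA]; exact Set.ncard_singleton f
  have hDcard : (T.edgeSet \ T'.edgeSet).ncard = 1 := by omega
  obtain ⟨e, hD⟩ := Set.ncard_eq_one.mp hDcard
  have heD : e ∈ T.edgeSet \ T'.edgeSet := by rw [hD]; rfl
  have heT : e ∈ T.edgeSet := heD.1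
  have heT' : e ∉ T'.edgeSet := heD.2
  have hef : e ≠ f := fun h => heT' (h ▸ hfT')
  have heact : InternallyActive G T e := act_of_not_IN heT (fun h => heT' (hIN h))
  have hE : T'.edgeSet = (T.edgeSet \ {e}) ∪ {f} := by
    ext z
    constructor
    · intro hz
      by_cases hzT : z ∈ T.edgeSet
      · exact Or.inl ⟨hzT, fun h => heT' (h ▸ hz)⟩
      · have hz' : z ∈ T'.edgeSet \ T.edgeSet := ⟨hz, hzT⟩
        rw [hA] at hz'
        exact Or.inr hz'
    · rintro (⟨hzT, hze⟩ | hzf)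
      · by_contra hzT'
        have hz' : z ∈ T.edgeSet \ T'.edgeSet := ⟨hzT, hzT'⟩
        rw [hD] at hz'
        exact hze hz'
      · rw [Set.mem_singleton_iff] at hzf
        rw [hzf]
        exact hfT'
  have hTfE : (T ⊔ fromEdgeSet {f}).edgeSet = T.edgeSet ∪ {f} := by
    rw [edgeSet_sup, edgeSet_fromEdgeSet]
    ext z
    simp only [Set.mem_union, Set.mem_diff, Set.mem_singleton_iff, Set.mem_setOf_eq]
    constructor
    · rintro (h | ⟨h, -⟩)
      exacts [Or.inl h, Or.inr h]
    · rintro (h | h)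
      exacts [Or.inl h, Or.inr ⟨h, h ▸ G.not_isDiag_of_mem_edgeSet hfG⟩]
  have hgraph : (T ⊔ fromEdgeSet {f}).deleteEdges {e} = T' := by
    apply edgeSet_inj.mp
    rw [edgeSet_deleteEdges, hTfE, hE]
    ext z
    simp only [Set.mem_diff, Set.mem_union, Set.mem_singleton_iff]
    constructor
    · rintro ⟨h | h, hze⟩
      exacts [Or.inl ⟨h, hze⟩, Or.inr h]
    · rintro (⟨h, hze⟩ | h)
      exacts [⟨Or.inl h, hze⟩, ⟨Or.inr h, fun hc => hef (hc ▸ h)⟩]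
  have hecyc : e ∈ cycset T f := by
    refine ⟨?_, ?_⟩
    · rw [hTfE]
      exact Or.inl heT
    · rw [hgraph]
      exact hT'.1.2.isConnected
  refine ⟨e, hecyc, heact, ?_, hE, ?_⟩
  · intro g hg hgact
    have hgT : g ∈ T.edgeSet := hgact.1
    by_cases hge : g = e
    · exact le_of_eq hge
    have hgf : g ≠ f := fun h => hfT (h ▸ hgT)
    have hgT' : g ∈ T'.edgeSet := by
      rw [hE]
      exact Or.inl ⟨hgT, hge⟩
    obtain ⟨p, q, hepq⟩ := hrep e
    have hnr : ¬(T'.deleteEdges {g}).Reachable p q := by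
      intro hr
      have hgraph2 : (T ⊔ fromEdgeSet {f}).deleteEdges {g}
          = (T'.deleteEdges {g}) ⊔ fromEdgeSet {e} := by
        apply edgeSet_inj.mp
        rw [edgeSet_sup, edgeSet_deleteEdges, edgeSet_deleteEdges, edgeSet_fromEdgeSet,
          hTfE, hE]
        ext z
        simp only [Set.mem_diff, Set.mem_union, Set.mem_singleton_iff, Set.mem_setOf_eq]
        constructor
        · rintro ⟨h | h, hzg⟩
          · by_cases hze : z = e
            · exact Or.inr ⟨hze, hze ▸ T.not_isDiag_of_mem_edgeSet heT⟩
            · exact Or.inl ⟨Or.inl ⟨h, hze⟩, hzg⟩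
          · exact Or.inl ⟨Or.inr h, hzg⟩
        · rintro (⟨h | h, hzg⟩ | ⟨rfl, -⟩)
          · exact ⟨Or.inl h.1, hzg⟩
          · exact ⟨Or.inr h, hzg⟩
          · exact ⟨Or.inl heT, fun h => hge h.symm⟩
      have hconn2 := hg.2
      rw [hgraph2] at hconn2
      obtain ⟨gu, gv, hguv⟩ := hrep g
      have hbr : ¬(T'.deleteEdges {g}).Reachable gu gv := by
        have := tree_bridge hT'.1.2.IsAcyclic (hguv ▸ hgT' : s(gu, gv) ∈ T'.edgeSet)
        rwa [← hguv] at this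
      apply hbr
      have hreach := hconn2.preconnected gu gv
      refine reach_of_reach ?_ hreach
      intro u v huv
      rcases (sup_adj _ _ _ _).mp huv with h' | h'
      · exact h'.reachable
      · rw [fromEdgeSet_adj] at h'
        have huv' : s(u, v) = s(p, q) := by
          rw [← hepq]
          exact Set.mem_singleton_iff.mp h'.1
        rcases Sym2.eq_iff.mp huv' with ⟨rfl, rfl⟩ | ⟨rfl, rfl⟩
        exacts [hr, hr.symm]
    have hecut : e ∈ cutset G T' g := by
      rw [hepq]
      exact mem_cutset' (edgeSet_mono hT.1.1 (hepq ▸ heT : s(p, q) ∈ T.edgeSet)) hnr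
    by_cases hact' : InternallyActive G T' g
    · exact hact'.2 e hecut
    · rcases h1 ⟨hgT', hact'⟩ with hgIN | hgf'
      · exact absurd hgact hgIN.2
      · exact absurd hgf' hgf
  · ext z
    constructor
    · exact fun hz => h1 hz
    · rintro (hzIN | hzf)
      · refine ⟨h2 (Set.mem_union_left _ hzIN), ?_⟩
        intro hzact
        exact lemW hT.1.2 hT'.1.2 hT.1.1 hfG hfT heT hE heact hzIN.1
          (h2 (Set.mem_union_left _ hzIN)) hzIN.2 hzact
      · rw [Set.mem_singleton_iff] at hzf
        subst hzf
        exact lemZ hT.1 hT'.1 hIN hfT' hfT
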